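/- Let a>0, b>0, c≥0, g0>0 and let f0, f1 be the MTTP vector fields on ℝ⁴. Then for every x = (x1,x2,x3,x4) ∈ ℝ⁴, the iterated Lie bracket ad³f0.f1(x) = [f0,[f0,[f0,f1]]](x) equals (−a b((x4 − 2 c x1) cos x3 + c x2 sin x3), −a b sin x3 (x4 − 3 c x1), −a b c sin x3, 0). -/

import Mathlib

/-- The drift vector field of the MTTP system on ℝ⁴. -/
noncomputable def mttpF0 (a c g0 : ℝ) : (Fin 4 → ℝ) → (Fin 4 → ℝ) :=
  fun x => ![a * Real.cos (x 2) - c * x 0 * x 1,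
             a * Real.sin (x 2) + c * (x 0) ^ 2 - g0,
             x 3 - c * x 0,
             0]

/-- The control vector field of the MTTP system on ℝ⁴. -/
def mttpF1 (b : ℝ) : (Fin 4 → ℝ) → (Fin 4 → ℝ) :=
  fun _ => ![0, 0, 0, b]

/-- Lie bracket of vector fields on ℝ⁴: [f,g](x) = Dg(x)·f(x) − Df(x)·g(x). -/
noncomputable def lieBracket4 (f g : (Fin 4 → ℝ) → (Fin 4 → ℝ)) :
    (Fin 4 → ℝ) → (Fin 4 → ℝ) :=
  fun x => fderiv ℝ g x (f x) - fderiv ℝ f x (g x)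

/-!
Bracketing with a constant field `v` gives `-Df0(x) v`, so `ad f0.f1 = (0, 0, -b, 0)` and
`ad² f0.f1 = (-ab sin x3, ab cos x3, 0, 0)` follow from the Jacobian of `f0` alone. The third
bracket then only needs, in addition, the Jacobian of this trigonometric field.
-/

open Real

theorem fderiv_apply_apply {E ι : Type*} [NormedAddCommGroup E] [NormedSpace ℝ E] [Fintype ι]
    {F : E → ι → ℝ} {x : E} (hF : ∀ i, DifferentiableAt ℝ (fun y => F y i) x) (v : E) (i : ι) :
    fderiv ℝ F x v i = fderiv ℝ (fun y => F y i) x v := by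
  rw [fderiv_apply (differentiableAt_pi.2 hF)]
  rfl

theorem lieBracket4_const_right (f : (Fin 4 → ℝ) → (Fin 4 → ℝ)) (v x : Fin 4 → ℝ) :
    lieBracket4 f (fun _ => v) x = -fderiv ℝ f x v := by
  simp [lieBracket4]

theorem fderiv_mttpF0_apply (a c g0 : ℝ) (x w : Fin 4 → ℝ) :
    fderiv ℝ (mttpF0 a c g0) x w =
      ![-(a * sin (x 2)) * w 2 - c * x 1 * w 0 - c * x 0 * w 1,
        2 * c * x 0 * w 0 + a * cos (x 2) * w 2,
        w 3 - c * w 0,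
        0] := by
  ext i
  rw [fderiv_apply_apply (fun i => by fin_cases i <;> simp [mttpF0] <;> fun_prop)]
  fin_cases i <;>
    simp (disch := fun_prop) [mttpF0, fderiv_fun_sub, fderiv_fun_add, fderiv_const_mul,
      fderiv_fun_mul, fderiv_fun_pow, fderiv_cos, fderiv_sin, (hasFDerivAt_apply _ _).fderiv] <;>
    ring

theorem fderiv_sin_cos_field_apply (k : ℝ) (x w : Fin 4 → ℝ) :
    fderiv ℝ (fun y : Fin 4 → ℝ => ![-k * sin (y 2), k * cos (y 2), 0, 0]) x w =
      ![-k * cos (x 2) * w 2, -k * sin (x 2) * w 2, 0, 0] := by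
  ext i
  rw [fderiv_apply_apply (fun i => by fin_cases i <;> simp <;> fun_prop)]
  fin_cases i <;>
    simp (disch := fun_prop) [fderiv_const_mul, fderiv_cos, fderiv_sin,
      (hasFDerivAt_apply _ _).fderiv] <;>
    ring

theorem lieBracket4_mttpF0_mttpF1 (a b c g0 : ℝ) :
    lieBracket4 (mttpF0 a c g0) (mttpF1 b) = fun _ => ![0, 0, -b, 0] := by
  ext x i
  unfold mttpF1
  rw [lieBracket4_const_right, fderiv_mttpF0_apply]
  fin_cases i <;> simp

theorem lieBracket4_mttpF0_lieBracket4_mttpF0_mttpF1 (a b c g0 : ℝ) :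
    lieBracket4 (mttpF0 a c g0) (lieBracket4 (mttpF0 a c g0) (mttpF1 b)) =
      fun x => ![-(a * b) * sin (x 2), a * b * cos (x 2), 0, 0] := by
  ext x i
  rw [lieBracket4_mttpF0_mttpF1, lieBracket4_const_right, fderiv_mttpF0_apply]
  fin_cases i <;> simp <;> ring

theorem stmt3_general (a b c g0 : ℝ)
    (x : Fin 4 → ℝ) :
    lieBracket4 (mttpF0 a c g0)
        (lieBracket4 (mttpF0 a c g0) (lieBracket4 (mttpF0 a c g0) (mttpF1 b))) x =
      ![-(a * b) * ((x 3 - 2 * c * x 0) * Real.cos (x 2) + c * x 1 * Real.sin (x 2)),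
        -(a * b) * Real.sin (x 2) * (x 3 - 3 * c * x 0),
        -(a * b * c) * Real.sin (x 2),
        0] := by
  rw [lieBracket4_mttpF0_lieBracket4_mttpF0_mttpF1]
  ext i
  simp only [lieBracket4, fderiv_mttpF0_apply, fderiv_sin_cos_field_apply]
  fin_cases i <;> simp [mttpF0] <;> ring

theorem stmt3 (a b c g0 : ℝ) (ha : 0 < a) (hb : 0 < b) (hc : 0 ≤ c) (hg0 : 0 < g0)
    (x : Fin 4 → ℝ) :
    lieBracket4 (mttpF0 a c g0)
        (lieBracket4 (mttpF0 a c g0) (lieBracket4 (mttpF0 a c g0) (mttpF1 b))) x =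
      ![-(a * b) * ((x 3 - 2 * c * x 0) * Real.cos (x 2) + c * x 1 * Real.sin (x 2)),
        -(a * b) * Real.sin (x 2) * (x 3 - 3 * c * x 0),
        -(a * b * c) * Real.sin (x 2),
        0] :=
  stmt3_general a b c g0 x
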